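/- Let S be a nonempty set, U ⊆ S, and suppose each d_p (p ∈ S) satisfies (d1), (d2) and (d3). Then T^U(N) = inf { d_p(N) | p ∈ U } satisfies (d2): for every short exact sequence 0 → K → L → N → 0, if T^U(L) > T^U(N) then T^U(K) = T^U(N) + 1. -/

import Mathlib

universe u v

/-- A `d`-function: assigns to every `Λ`-module a value in `ℕ ∪ {∞}`. -/
abbrev DFun (Λ : Type u) [Ring Λ] :=
  (N : Type u) → [AddCommGroup N] → [Module Λ N] → ℕ∞

/-- Condition (d1): if `d L > d K` then `d K = d N + 1`. -/
def CondD1 (Λ : Type u) [Ring Λ] (d : DFun Λ) : Prop :=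
  ∀ (K L N : Type u) [AddCommGroup K] [Module Λ K] [AddCommGroup L] [Module Λ L]
    [AddCommGroup N] [Module Λ N] (f : K →ₗ[Λ] L) (g : L →ₗ[Λ] N),
    Function.Injective f → Function.Surjective g →
    LinearMap.range f = LinearMap.ker g →
    d K < d L → d K = d N + 1

/-- Condition (d2): if `d L > d N` then `d K = d N + 1`. -/
def CondD2 (Λ : Type u) [Ring Λ] (d : DFun Λ) : Prop :=
  ∀ (K L N : Type u) [AddCommGroup K] [Module Λ K] [AddCommGroup L] [Module Λ L]
    [AddCommGroup N] [Module Λ N] (f : K →ₗ[Λ] L) (g : L →ₗ[Λ] N),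
    Function.Injective f → Function.Surjective g →
    LinearMap.range f = LinearMap.ker g →
    d N < d L → d K = d N + 1

/-- Condition (d3): if `d L < d N` then `d K ≤ d L`. -/
def CondD3 (Λ : Type u) [Ring Λ] (d : DFun Λ) : Prop :=
  ∀ (K L N : Type u) [AddCommGroup K] [Module Λ K] [AddCommGroup L] [Module Λ L]
    [AddCommGroup N] [Module Λ N] (f : K →ₗ[Λ] L) (g : L →ₗ[Λ] N),
    Function.Injective f → Function.Surjective g →
    LinearMap.range f = LinearMap.ker g →
    d L < d N → d K ≤ d L

/-- `T^U(N) = inf { d_p(N) | p ∈ U }` (infimum over the empty set is `∞`). -/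
noncomputable def TU (Λ : Type u) [Ring Λ] {S : Type v} (d : S → DFun Λ)
    (U : Set S) (N : Type u) [AddCommGroup N] [Module Λ N] : ℕ∞ :=
  ⨅ p : U, d p N

/-! Infima in `ℕ∞` are attained, so some `p ∈ U` has `d_p(N) = T^U(N) < T^U(L) ≤ d_p(L)`, and (d2)
for `d_p` gives `T^U(K) ≤ d_p(K) = T^U(N) + 1`. Conversely, for each `q ∈ U` either `d_q(K) < d_q(L)`,
so `d_q(K) = d_q(N) + 1` by (d1), or `d_q(K) ≥ d_q(L) ≥ T^U(L) ≥ T^U(N) + 1`. -/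

namespace ENat

variable {ι : Sort*} {a b c : ι → ℕ∞}

theorem iInf_le_iInf_add_one_of_lt (h : ∀ i, c i < b i → a i = c i + 1)
    (hcb : ⨅ i, c i < ⨅ i, b i) : ⨅ i, a i ≤ (⨅ i, c i) + 1 := by
  cases isEmpty_or_nonempty ι
  · simp only [iInf_of_empty, lt_self_iff_false] at hcb
  obtain ⟨p, hp⟩ := exists_eq_iInf c
  have hpb : c p < b p := hp ▸ hcb.trans_le (iInf_le b p)
  calc ⨅ i, a i ≤ a p := iInf_le a p
    _ = c p + 1 := h p hpb
    _ = (⨅ i, c i) + 1 := by rw [hp]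

theorem iInf_add_one_le_iInf (h : ∀ i, a i < b i → a i = c i + 1)
    (hcb : (⨅ i, c i) + 1 ≤ ⨅ i, b i) : (⨅ i, c i) + 1 ≤ ⨅ i, a i := by
  refine le_iInf fun q => ?_
  rcases lt_or_ge (a q) (b q) with hab | hba
  · rw [h q hab]
    exact add_le_add_left (iInf_le c q) 1
  · exact hcb.trans ((iInf_le b q).trans hba)

end ENat

theorem stmt9_general (Λ : Type u) [Ring Λ] (S : Type v) (U : Set S)
    (d : S → DFun Λ)
    (hd1 : ∀ p : S, CondD1 Λ (d p)) (hd2 : ∀ p : S, CondD2 Λ (d p)) :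
    CondD2 Λ (fun N _ _ => TU Λ d U N) := by
  intro K L N _ _ _ _ _ _ f g hf hg hfg hlt
  have hd1_at (p : U) : d p K < d p L → d p K = d p N + 1 := hd1 p K L N f g hf hg hfg
  have hd2_at (p : U) : d p N < d p L → d p K = d p N + 1 := hd2 p K L N f g hf hg hfg
  exact le_antisymm (ENat.iInf_le_iInf_add_one_of_lt hd2_at hlt)
    (ENat.iInf_add_one_le_iInf hd1_at (Order.add_one_le_of_lt hlt))

/-- If each `d_p` satisfies (d1), (d2) and (d3), then `T^U` satisfies (d2). -/
theorem stmt9 (Λ : Type u) [Ring Λ] (S : Type v) [Nonempty S] (U : Set S)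
    (d : S → DFun Λ)
    (hd1 : ∀ p : S, CondD1 Λ (d p)) (hd2 : ∀ p : S, CondD2 Λ (d p))
    (hd3 : ∀ p : S, CondD3 Λ (d p)) :
    CondD2 Λ (fun N _ _ => TU Λ d U N) :=
  stmt9_general Λ S U d hd1 hd2
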